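/- arXiv:1311.0738 — 6 statements merged into one kernel-verified Lean document; each statement's English description precedes it below -/
import Mathlib

section
/- Let G be a countable group acting in a Borel way on a standard Borel space Z, and let F₂ (the free group on two generators) act in a Borel way on G × Z such that this action commutes with the diagonal G-action g'·(g, z) = (g'g, g'·z) and preserves the second coordinate (f·(g, z) ∈ G × {z} for all f). Let c : ℕ × Z → G × Z be a Borel injection whose image meets every F₂-orbit exactly once and with c(n, z) ∈ G × {z} for all n, z. Then the rule δ(g, z)(n) = k ⟺ g·c(n, z) ∈ F₂·c(k, g·z) well-defines a map δ : G × Z → Sym(ℕ) (each δ(g, z) is a bijection of ℕ), and δ is a G-cocycle: δ(hg, z) = δ(h, g·z) ∘ δ(g, z) for all g, h ∈ G and z ∈ Z. -/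
/-- The free group on two generators. -/
abbrev F2 := FreeGroup (Fin 2)

theorem stmt12 (G : Type*) [Group G] [Countable G]
    [MeasurableSpace G] [DiscreteMeasurableSpace G]
    (Z : Type) [MeasurableSpace Z] [StandardBorelSpace Z]
    -- a Borel action of G on Z
    (a : G → Z → Z) (ha1 : a 1 = id) (hamul : ∀ g g' : G, a (g * g') = a g ∘ a g')
    (hameas : ∀ g : G, Measurable (a g))
    -- a Borel action of F₂ on G × Z
    (d : F2 → G × Z → G × Z)
    (hd1 : ∀ p : G × Z, d 1 p = p)
    (hdmul : ∀ (f f' : F2) (p : G × Z), d (f * f') p = d f (d f' p))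
    (hdmeas : ∀ f : F2, Measurable (d f))
    -- commuting with the diagonal G-action and preserving the second coordinate
    (hdcomm : ∀ (g' : G) (f : F2) (p : G × Z),
      d f (g' * p.1, a g' p.2) = (g' * (d f p).1, a g' (d f p).2))
    (hdsnd : ∀ (f : F2) (p : G × Z), (d f p).2 = p.2)
    -- a Borel injection whose image is a transversal of the F₂-orbits
    (c : ℕ × Z → G × Z) (hcmeas : Measurable c) (hcinj : Function.Injective c)
    (hctrans : ∀ p : G × Z, ∃! q : G × Z, q ∈ Set.range c ∧ ∃ f : F2, d f q = p)
    (hcsnd : ∀ (n : ℕ) (z : Z), (c (n, z)).2 = z) :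
    ∃ δ : G → Z → Equiv.Perm ℕ,
      -- the defining rule: δ(g,z)(n) = k ⟺ g·c(n,z) ∈ F₂·c(k, g·z)
      (∀ (g : G) (z : Z) (n k : ℕ),
        δ g z n = k ↔ ∃ f : F2, d f (c (k, a g z)) = (g * (c (n, z)).1, a g (c (n, z)).2)) ∧
      -- δ is a G-cocycle
      (∀ (g h : G) (z : Z) (n : ℕ), δ (h * g) z n = δ h (a g z) (δ g z n)) := by
  classical
  have key : ∀ p : G × Z, ∃ nw : ℕ × Z, (∃ f : F2, d f (c nw) = p) ∧
      ∀ nw' : ℕ × Z, (∃ f : F2, d f (c nw') = p) → nw' = nw := by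
    intro p
    obtain ⟨q, ⟨⟨nw, rfl⟩, hf⟩, huniq⟩ := hctrans p
    exact ⟨nw, hf, fun nw' hf' => hcinj (huniq (c nw') ⟨⟨nw', rfl⟩, hf'⟩)⟩
  choose sel hsel hselu using key
  have hsnd : ∀ p : G × Z, (sel p).2 = p.2 := by
    intro p
    obtain ⟨f, hf⟩ := hsel p
    have h1 : (c (sel p)).2 = (sel p).2 := by
      have := hcsnd (sel p).1 (sel p).2
      simpa using this
    calc (sel p).2 = (c (sel p)).2 := h1.symm
      _ = (d f (c (sel p))).2 := (hdsnd f _).symm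
      _ = p.2 := by rw [hf]
  set φ : G → Z → ℕ → ℕ := fun g z n => (sel (g * (c (n,z)).1, a g (c (n,z)).2)).1 with hφ
  have hsel_eq : ∀ g z n, sel (g * (c (n,z)).1, a g (c (n,z)).2) = (φ g z n, a g z) := by
    intro g z n
    have h2 := hsnd (g * (c (n,z)).1, a g (c (n,z)).2)
    exact Prod.ext rfl (h2.trans (by rw [hcsnd]))
  have hiff : ∀ g z n k, φ g z n = k ↔
      ∃ f : F2, d f (c (k, a g z)) = (g * (c (n,z)).1, a g (c (n,z)).2) := by
    intro g z n k
    constructor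
    · rintro rfl
      have := hsel (g * (c (n,z)).1, a g (c (n,z)).2)
      rwa [hsel_eq] at this
    · intro hf
      have := hselu _ (k, a g z) hf
      rw [hsel_eq g z n] at this
      exact (Prod.ext_iff.mp this).1.symm
  have hid : ∀ z n, φ 1 z n = n := by
    intro z n
    rw [hiff]
    exact ⟨1, by rw [hd1]; simp [ha1]⟩
  have hcoc : ∀ g h z n, φ (h * g) z n = φ h (a g z) (φ g z n) := by
    intro g h z n
    obtain ⟨f, hf⟩ := (hiff g z n (φ g z n)).mp rfl
    obtain ⟨f', hf'⟩ := (hiff h (a g z) (φ g z n) (φ h (a g z) (φ g z n))).mp rfl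
    rw [hiff]
    refine ⟨f * f', ?_⟩
    have hz : a (h * g) z = a h (a g z) := by rw [hamul]; rfl
    rw [hz, hdmul, hf', hdcomm h f (c (φ g z n, a g z)), hf]
    simp [mul_assoc, hamul]
  have hli : ∀ g z n, φ g⁻¹ (a g z) (φ g z n) = n := by
    intro g z n
    rw [← hcoc, inv_mul_cancel, hid]
  have hri : ∀ g z n, φ g z (φ g⁻¹ (a g z) n) = n := by
    intro g z n
    have h1 : a g⁻¹ (a g z) = z := by
      have := congrFun (hamul g⁻¹ g) z
      rw [inv_mul_cancel, ha1] at this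
      exact this.symm
    have h2 := hcoc g⁻¹ g (a g z) n
    rw [mul_inv_cancel, hid, h1] at h2
    exact h2.symm
  refine ⟨fun g z => ⟨φ g z, φ g⁻¹ (a g z), hli g z, hri g z⟩, ?_, ?_⟩
  · exact fun g z n k => hiff g z n k
  · exact fun g h z n => hcoc g h z n
end

section
/- Let G be a countable group acting in a Borel way on a standard Borel space Z, and let F₂ (the free group on two generators) act freely in a Borel way on G × Z such that this action commutes with the diagonal G-action g'·(g, z) = (g'g, g'·z) and preserves the second coordinate. Let c : ℕ × Z → G × Z be a Borel injection whose image meets every F₂-orbit exactly once and with c(n, z) ∈ G × {z}, and let δ : G × Z → Sym(ℕ) be defined by δ(g, z)(n) = k ⟺ g·c(n, z) ∈ F₂·c(k, g·z). Then the rule γ(g, n, z) = u ⟺ g·c(n, z) = u⁻¹·c(δ(g, z)(n), g·z) well-defines a map γ : G × ℕ × Z → F₂, and γ satisfies the cocycle identity γ(hg, n, z) = γ(h, δ(g, z)(n), g·z) · γ(g, n, z) for all g, h ∈ G, n ∈ ℕ, z ∈ Z (i.e. γ is a G-cocycle for the skew action g·(n, z) = (δ(g, z)(n), g·z)). -/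
theorem stmt13 (G : Type*) [Group G] [Countable G]
    [MeasurableSpace G] [DiscreteMeasurableSpace G]
    (Z : Type) [MeasurableSpace Z] [StandardBorelSpace Z]
    -- a Borel action of G on Z
    (a : G → Z → Z) (ha1 : a 1 = id) (hamul : ∀ g g' : G, a (g * g') = a g ∘ a g')
    (hameas : ∀ g : G, Measurable (a g))
    -- a free Borel action of F₂ on G × Z
    (d : F2 → G × Z → G × Z)
    (hd1 : ∀ p : G × Z, d 1 p = p)
    (hdmul : ∀ (f f' : F2) (p : G × Z), d (f * f') p = d f (d f' p))
    (hdmeas : ∀ f : F2, Measurable (d f))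
    (hdfree : ∀ f : F2, f ≠ 1 → ∀ p : G × Z, d f p ≠ p)
    -- commuting with the diagonal G-action and preserving the second coordinate
    (hdcomm : ∀ (g' : G) (f : F2) (p : G × Z),
      d f (g' * p.1, a g' p.2) = (g' * (d f p).1, a g' (d f p).2))
    (hdsnd : ∀ (f : F2) (p : G × Z), (d f p).2 = p.2)
    -- a Borel injection whose image is a transversal of the F₂-orbits
    (c : ℕ × Z → G × Z) (hcmeas : Measurable c) (hcinj : Function.Injective c)
    (hctrans : ∀ p : G × Z, ∃! q : G × Z, q ∈ Set.range c ∧ ∃ f : F2, d f q = p)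
    (hcsnd : ∀ (n : ℕ) (z : Z), (c (n, z)).2 = z)
    -- the cocycle δ, defined by δ(g,z)(n) = k ⟺ g·c(n,z) ∈ F₂·c(k, g·z)
    (δ : G → Z → Equiv.Perm ℕ)
    (hδ : ∀ (g : G) (z : Z) (n k : ℕ),
      δ g z n = k ↔ ∃ f : F2, d f (c (k, a g z)) = (g * (c (n, z)).1, a g (c (n, z)).2)) :
    ∃ γ : G → ℕ → Z → F2,
      -- the defining rule: γ(g,n,z) = u ⟺ g·c(n,z) = u⁻¹·c(δ(g,z)(n), g·z)
      (∀ (g : G) (n : ℕ) (z : Z) (u : F2),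
        (g * (c (n, z)).1, a g (c (n, z)).2) = d u⁻¹ (c (δ g z n, a g z)) ↔ u = γ g n z) ∧
      -- the cocycle identity
      (∀ (g h : G) (n : ℕ) (z : Z),
        γ (h * g) n z = γ h (δ g z n) (a g z) * γ g n z) := by

  classical
  have hdinj : ∀ (f f' : F2) (p : G × Z), d f p = d f' p → f = f' := by
    intro f f' p h
    by_contra hne
    have hne1 : f'⁻¹ * f ≠ 1 := by
      intro h1
      exact hne ((inv_mul_eq_one.mp h1).symm)
    exact hdfree _ hne1 p (by rw [hdmul, h, ← hdmul, inv_mul_cancel, hd1])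
  have spec : ∀ (g : G) (n : ℕ) (z : Z),
      ∃ f : F2, d f (c (δ g z n, a g z)) = (g * (c (n, z)).1, a g (c (n, z)).2) :=
    fun g n z => (hδ g z n (δ g z n)).mp rfl
  set γ : G → ℕ → Z → F2 := fun g n z => (Classical.choose (spec g n z))⁻¹ with hγdef
  have hγ : ∀ (g : G) (n : ℕ) (z : Z),
      d (γ g n z)⁻¹ (c (δ g z n, a g z)) = (g * (c (n, z)).1, a g (c (n, z)).2) := by
    intro g n z
    simp only [hγdef, inv_inv]
    exact Classical.choose_spec (spec g n z)
  have key : ∀ (g : G) (n : ℕ) (z : Z) (u : F2),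
      (g * (c (n, z)).1, a g (c (n, z)).2) = d u⁻¹ (c (δ g z n, a g z)) ↔ u = γ g n z := by
    intro g n z u
    constructor
    · intro h
      have := hdinj u⁻¹ (γ g n z)⁻¹ (c (δ g z n, a g z)) (by rw [hγ g n z]; exact h.symm)
      exact inv_injective this
    · intro h; subst h; exact (hγ g n z).symm
  refine ⟨γ, key, ?_⟩
  intro g h n z
  set z' := a g z with hz'
  set n' := δ g z n with hn'
  set u := γ g n z with hu
  set v := γ h n' z' with hv
  have eq1 : d u⁻¹ (c (n', z')) = (g * (c (n, z)).1, a g (c (n, z)).2) := hγ g n z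
  have eq2 : d v⁻¹ (c (δ h z' n', a h z')) = (h * (c (n', z')).1, a h (c (n', z')).2) :=
    hγ h n' z'
  have hcomp : ((h * g) * (c (n, z)).1, a (h * g) (c (n, z)).2)
      = d (v * u)⁻¹ (c (δ h z' n', a h z')) := by
    have step : d u⁻¹ (h * (c (n', z')).1, a h (c (n', z')).2)
        = (h * (d u⁻¹ (c (n', z'))).1, a h (d u⁻¹ (c (n', z'))).2) := hdcomm h u⁻¹ _
    rw [mul_inv_rev, hdmul, eq2, step, eq1, mul_assoc, hamul]
    rfl
  have hδeq : δ (h * g) z n = δ h z' n' := by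
    rw [hδ]
    refine ⟨(v * u)⁻¹, ?_⟩
    have : a (h * g) z = a h z' := by rw [hamul]; rfl
    rw [this]
    exact hcomp.symm
  have := (key (h * g) n z (v * u)).mp (by rw [hδeq, hamul]; exact (by rw [hamul] at hcomp; exact hcomp))
  exact this.symm
end

section
/- Let G be a countable group acting in a Borel way on a standard Borel space Z, and let F₂ (the free group on two generators) act freely in a Borel way on G × Z such that this action commutes with the diagonal G-action g'·(g, z) = (g'g, g'·z) and preserves the second coordinate. Let c : ℕ × Z → G × Z be a Borel injection whose image meets every F₂-orbit exactly once and with c(n, z) ∈ G × {z}. Let δ : G × Z → Sym(ℕ) satisfy g·c(n, z) ∈ F₂·c(δ(g, z)(n), g·z), and let γ : G × ℕ × Z → F₂ satisfy g·c(n, z) = γ(g, n, z)⁻¹·c(δ(g, z)(n), g·z). Then the map ψ : F₂ × ℕ × Z → G × Z defined by ψ(f, n, z) = f⁻¹·c(n, z) is a Borel bijection, and it conjugates the diagonal G-action on G × Z to the double skew product G-action on F₂ × ℕ × Z given by g·(f, n, z) = (γ(g, n, z)·f, δ(g, z)(n), g·z); that is, g·ψ(f, n, z) = ψ(γ(g,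 n, z)·f, δ(g, z)(n), g·z) for all g ∈ G, f ∈ F₂, n ∈ ℕ, z ∈ Z. -/
instance : MeasurableSpace F2 := ⊤

theorem stmt14 (G : Type*) [Group G] [Countable G]
    [MeasurableSpace G] [DiscreteMeasurableSpace G]
    (Z : Type) [MeasurableSpace Z] [StandardBorelSpace Z]
    -- a Borel action of G on Z
    (a : G → Z → Z) (ha1 : a 1 = id) (hamul : ∀ g g' : G, a (g * g') = a g ∘ a g')
    (hameas : ∀ g : G, Measurable (a g))
    -- a free Borel action of F₂ on G × Z
    (d : F2 → G × Z → G × Z)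
    (hd1 : ∀ p : G × Z, d 1 p = p)
    (hdmul : ∀ (f f' : F2) (p : G × Z), d (f * f') p = d f (d f' p))
    (hdmeas : ∀ f : F2, Measurable (d f))
    (hdfree : ∀ f : F2, f ≠ 1 → ∀ p : G × Z, d f p ≠ p)
    -- commuting with the diagonal G-action and preserving the second coordinate
    (hdcomm : ∀ (g' : G) (f : F2) (p : G × Z),
      d f (g' * p.1, a g' p.2) = (g' * (d f p).1, a g' (d f p).2))
    (hdsnd : ∀ (f : F2) (p : G × Z), (d f p).2 = p.2)
    -- a Borel injection whose image is a transversal of the F₂-orbits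
    (c : ℕ × Z → G × Z) (hcmeas : Measurable c) (hcinj : Function.Injective c)
    (hctrans : ∀ p : G × Z, ∃! q : G × Z, q ∈ Set.range c ∧ ∃ f : F2, d f q = p)
    (hcsnd : ∀ (n : ℕ) (z : Z), (c (n, z)).2 = z)
    -- δ satisfying g·c(n,z) ∈ F₂·c(δ(g,z)(n), g·z)
    (δ : G → Z → Equiv.Perm ℕ)
    (hδ : ∀ (g : G) (z : Z) (n : ℕ),
      ∃ f : F2, d f (c (δ g z n, a g z)) = (g * (c (n, z)).1, a g (c (n, z)).2))
    -- γ satisfying g·c(n,z) = γ(g,n,z)⁻¹·c(δ(g,z)(n), g·z)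
    (γ : G → ℕ → Z → F2)
    (hγ : ∀ (g : G) (n : ℕ) (z : Z),
      (g * (c (n, z)).1, a g (c (n, z)).2) = d (γ g n z)⁻¹ (c (δ g z n, a g z)))
    -- the map ψ(f, n, z) = f⁻¹ · c(n, z)
    (ψ : F2 × ℕ × Z → G × Z)
    (hψ : ∀ (f : F2) (n : ℕ) (z : Z), ψ (f, n, z) = d f⁻¹ (c (n, z))) :
    Measurable ψ ∧ Function.Bijective ψ ∧
      ∀ (g : G) (f : F2) (n : ℕ) (z : Z),
        (g * (ψ (f, n, z)).1, a g (ψ (f, n, z)).2) = ψ (γ g n z * f, δ g z n, a g z) := by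
  have hmsc : MeasurableSingletonClass F2 := ⟨fun _ => trivial⟩
  have hcount : Countable F2 := FreeGroup.toWord_injective.countable
  refine ⟨?_, ⟨?_, ?_⟩, ?_⟩
  · -- measurability
    have : ∀ f : F2, Measurable fun q : ℕ × Z => ψ (f, q.1, q.2) := by
      intro f
      have : (fun q : ℕ × Z => ψ (f, q.1, q.2)) = d f⁻¹ ∘ c := by
        funext q; simp [hψ]
      rw [this]
      exact (hdmeas f⁻¹).comp hcmeas
    have hm : Measurable fun p : (ℕ × Z) × F2 => ψ (p.2, p.1.1, p.1.2) :=
      measurable_from_prod_countable_left (fun f => this f)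
    have : ψ = (fun p : (ℕ × Z) × F2 => ψ (p.2, p.1.1, p.1.2)) ∘ fun p : F2 × ℕ × Z => (p.2, p.1) := by
      funext p; rfl
    rw [this]
    exact hm.comp (measurable_snd.prodMk measurable_fst)
  · -- injective
    rintro ⟨f, n, z⟩ ⟨f', n', z'⟩ h
    rw [hψ, hψ] at h
    have hc : c (n, z) = d (f * f'⁻¹) (c (n', z')) := by
      have := congrArg (d f) h
      rw [← hdmul, ← hdmul, mul_inv_cancel, hd1] at this
      exact this
    have huniq := hctrans (c (n, z))
    obtain ⟨q, -, hq⟩ := huniq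
    have h1 : c (n, z) = c (n', z') := by
      have e1 : q = c (n, z) := (hq (c (n, z)) ⟨⟨(n, z), rfl⟩, 1, hd1 _⟩).symm
      have e2 : q = c (n', z') := (hq (c (n', z')) ⟨⟨(n', z'), rfl⟩, f * f'⁻¹, hc.symm⟩).symm
      rw [← e1, e2]
    obtain ⟨hn, hz⟩ := Prod.mk.injEq .. ▸ hcinj h1
    have hf : f = f' := by
      by_contra hne
      have : f * f'⁻¹ ≠ 1 := fun h0 => hne (mul_inv_eq_one.mp h0)
      exact hdfree _ this (c (n', z')) (by rw [← hc, h1])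
    simp [hf, hn, hz]
  · -- surjective
    intro p
    obtain ⟨q, ⟨⟨⟨n, z⟩, hq⟩, f, hf⟩, -⟩ := hctrans p
    exact ⟨(f⁻¹, n, z), by rw [hψ, inv_inv, hq, hf]⟩
  · -- equivariance
    intro g f n z
    rw [hψ, hψ, ← hdcomm, hγ, ← hdmul, mul_inv_rev]
end

section
/- Let G be a countable group and let G act in a Borel way on a standard Borel space X. Then there is an injective G-equivariant Borel map φ : X → (2^ℕ)^G, where G acts on (2^ℕ)^G by the left shift (g·y)(h) = y(g⁻¹h). -/
open Classical in
lemma cantor_not_countable : ¬ Countable (ℕ → Bool) := by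
  intro h
  obtain ⟨e, he⟩ := (countable_iff_exists_injective _).mp h
  have hg : Function.Injective (fun s : Set ℕ => fun n => decide (n ∈ s)) := by
    intro s t hst
    ext n
    have := congrFun hst n
    simpa using this
  exact Function.cantor_injective (e ∘ (fun s : Set ℕ => fun n => decide (n ∈ s)))
    (he.comp hg)

/-- The left shift action of `G` on the Bernoulli shift `K^G`. -/
def bshift {G : Type*} [Group G] (K : Type*) (g : G) (x : G → K) : G → K :=
  fun h => x (g⁻¹ * h)

theorem stmt15 (G : Type*) [Group G] [Countable G]
    (X : Type) [MeasurableSpace X] [StandardBorelSpace X] [MulAction G X]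
    (hmeas : ∀ g : G, Measurable fun x : X => g • x) :
    ∃ φ : X → G → (ℕ → Bool), Measurable φ ∧ Function.Injective φ ∧
      ∀ (g : G) (x : X), φ (g • x) = bshift (ℕ → Bool) g (φ x) := by
  obtain ⟨f, hf⟩ := MeasureTheory.exists_measurableEmbedding_real X
  have hR : ¬ Countable ℝ := fun h => Cardinal.not_countable_real
    (by simpa using Set.countable_univ (α := ℝ))
  let e : ℝ ≃ᵐ (ℕ → Bool) := PolishSpace.measurableEquivOfNotCountable hR cantor_not_countable
  refine ⟨fun x g => e (f (g⁻¹ • x)), ?_, ?_, ?_⟩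
  · exact measurable_pi_lambda _ fun g =>
      e.measurable.comp (hf.measurable.comp (hmeas g⁻¹))
  · intro x y hxy
    have := congrFun hxy 1
    simp only [inv_one, one_smul] at this
    exact hf.injective (e.injective this)
  · intro g x
    funext h
    simp only [bshift, mul_inv_rev, inv_inv]
    rw [← mul_smul]
end

section
/- Let G be a countable group acting continuously on a Polish space X. Then there is a G-invariant Polish subspace Y ⊆ (2^ℕ)^G (i.e. a G-invariant G_δ subset of (2^ℕ)^G, where G acts by the left shift) and a continuous G-equivariant surjection from Y onto X. Furthermore, if X is compact then Y can be chosen to be compact. -/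
open Set Topology

namespace CantorCover

noncomputable def firstFalse (s : ℕ → Bool) : ℕ := sInf {k | s k = false}

lemma firstFalse_eq {s : ℕ → Bool} {a : ℕ} (h_lt : ∀ k < a, s k = true) (h_eq : s a = false) :
    firstFalse s = a :=
  le_antisymm (Nat.sInf_le h_eq) <| le_of_not_gt fun h => by
    have h_false : s (firstFalse s) = false := Nat.sInf_mem (s := {k | s k = false}) ⟨a, h_eq⟩
    simp [h_lt _ h] at h_false

lemma continuousOn_firstFalse : ContinuousOn firstFalse {s | ∃ k, s k = false} := by
  intro s hs
  have h_eq : s (firstFalse s) = false := Nat.sInf_mem hs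
  have h_lt : ∀ k < firstFalse s, s k = true := fun k hk => by
    simpa using Nat.notMem_of_lt_sInf hk
  refine (Filter.EventuallyEq.continuousAt (y := firstFalse s) ?_).continuousWithinAt
  filter_upwards [(PiNat.isOpen_cylinder _ s (firstFalse s + 1)).mem_nhds
    (PiNat.self_mem_cylinder s _)] with t ht
  exact firstFalse_eq (fun k hk => (ht k (by omega)).trans (h_lt k hk))
    ((ht _ (by omega)).trans h_eq)

/-- Column `n` of `encode a`, i.e. the bits at `Nat.pair n k`, is `a n` in unary: `a n` trues
followed by falses; `decode` reads off the first false of each column. -/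
def encode (a : ℕ → ℕ) (m : ℕ) : Bool := decide (m.unpair.2 < a m.unpair.1)

noncomputable def decode (y : ℕ → Bool) (n : ℕ) : ℕ := firstFalse fun k => y (Nat.pair n k)

def decodable : Set (ℕ → Bool) := {y | ∀ n, ∃ k, y (Nat.pair n k) = false}

lemma encode_mem_decodable (a : ℕ → ℕ) : encode a ∈ decodable :=
  fun n => ⟨a n, by simp [encode]⟩

lemma decode_encode (a : ℕ → ℕ) : decode (encode a) = a :=
  funext fun n => firstFalse_eq (fun k hk => by simp [encode, hk]) (by simp [encode])

lemma isGδ_decodable : IsGδ decodable := by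
  have : decodable = ⋂ n, ⋃ k, {y : ℕ → Bool | y (Nat.pair n k) = false} := by
    ext y; simp [decodable]
  rw [this]
  exact .iInter_of_isOpen fun n => isOpen_iUnion fun k =>
    (isOpen_discrete {false}).preimage (continuous_apply (A := fun _ => Bool) (Nat.pair n k))

lemma continuousOn_decode : ContinuousOn decode decodable :=
  continuousOn_pi.2 fun n => continuousOn_firstFalse.comp
    (continuous_pi fun _ => continuous_apply _).continuousOn fun _ hy => hy n

end CantorCover

open CantorCover in
theorem PolishSpace.exists_isGδ_cantor_surjOn (X : Type*) [TopologicalSpace X] [PolishSpace X]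
    [Nonempty X] : ∃ Z : Set (ℕ → Bool), IsGδ Z ∧
      ∃ π : (ℕ → Bool) → X, ContinuousOn π Z ∧ SurjOn π Z univ := by
  obtain ⟨f, hf, hf_surj⟩ := PolishSpace.exists_nat_nat_continuous_surjective X
  refine ⟨decodable, isGδ_decodable, f ∘ decode, hf.comp_continuousOn continuousOn_decode,
    fun x _ => ?_⟩
  obtain ⟨a, rfl⟩ := hf_surj x
  exact ⟨encode a, encode_mem_decodable a, by simp [decode_encode]⟩

section OrbitLifts

variable {G K X : Type*} [Group G] [MulAction G X]

variable (X) in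
def IsEquivariantCover [TopologicalSpace K] [TopologicalSpace X] (Y : Set (G → K)) : Prop :=
  (∀ (g : G) (x : G → K), x ∈ Y → bshift K g x ∈ Y) ∧
    ∃ φ : Y → X, Continuous φ ∧ Function.Surjective φ ∧
      ∀ (g : G) (x : G → K) (hx : x ∈ Y) (hgx : bshift K g x ∈ Y),
        φ ⟨bshift K g x, hgx⟩ = g • φ ⟨x, hx⟩

lemma isEquivariantCover_empty [TopologicalSpace K] [TopologicalSpace X] [IsEmpty X] :
    IsEquivariantCover X (∅ : Set (G → K)) :=
  ⟨fun _ _ => id, fun y => absurd y.2 (notMem_empty _), continuous_of_discreteTopology,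
    isEmptyElim, fun _ _ hx => absurd hx (notMem_empty _)⟩

def orbitLifts (Z : Set K) (π : K → X) : Set (G → K) :=
  {x | ∀ g, x g ∈ Z ∧ π (x g) = g⁻¹ • π (x 1)}

variable {Z : Set K} {π : K → X}

lemma bshift_mem_orbitLifts {x : G → K} (hx : x ∈ orbitLifts Z π) (g : G) :
    bshift K g x ∈ orbitLifts Z π := by
  intro h
  refine ⟨(hx _).1, ?_⟩
  show π (x (g⁻¹ * h)) = h⁻¹ • π (x (g⁻¹ * 1))
  rw [mul_one, (hx _).2, (hx g⁻¹).2, mul_inv_rev, inv_inv, mul_smul]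

variable [TopologicalSpace K] [TopologicalSpace X]

lemma isEquivariantCover_orbitLifts (hπ : ContinuousOn π Z) (hsurj : SurjOn π Z univ) :
    IsEquivariantCover X (orbitLifts (G := G) Z π) := by
  refine ⟨fun g x hx => bshift_mem_orbitLifts hx g, fun y => π (y.1 1),
    hπ.comp_continuous ((continuous_apply 1).comp continuous_subtype_val) fun y => (y.2 1).1,
    fun p => ?_, fun g x hx _ => ?_⟩
  · choose z hz hπz using fun g : G => hsurj (mem_univ (g⁻¹ • p))
    exact ⟨⟨z, fun g => ⟨hz g, by rw [hπz, hπz, inv_one, one_smul]⟩⟩, by simp [hπz]⟩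
  · show π (x (g⁻¹ * 1)) = g • π (x 1)
    rw [mul_one, (hx g⁻¹).2, inv_inv]

lemma exists_isClosed_orbitLifts_eq_inter (hcont : ∀ g : G, Continuous fun p : X => g • p)
    [T2Space X] (hπ : ContinuousOn π Z) :
    ∃ F, IsClosed F ∧ orbitLifts Z π = F ∩ univ.pi fun _ : G => Z := by
  let f : (G → K) → G → X × X := fun x g => (π (x g), g⁻¹ • π (x 1))
  have hf : ContinuousOn f (univ.pi fun _ => Z) := by
    have hπ_apply (g : G) : ContinuousOn (fun x : G → K => π (x g)) (univ.pi fun _ => Z) :=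
      hπ.comp (continuous_apply g).continuousOn fun _ hx => hx g (mem_univ g)
    exact continuousOn_pi.2 fun g =>
      (hπ_apply g).prodMk ((hcont _).comp_continuousOn (hπ_apply 1))
  obtain ⟨F, hF, hFeq⟩ := continuousOn_iff_isClosed.1 hf (univ.pi fun _ : G => diagonal X)
    (isClosed_set_pi fun _ _ => isClosed_diagonal)
  refine ⟨F, hF, ?_⟩
  rw [← hFeq]
  ext x
  simp [orbitLifts, f, forall_and, and_comm]

lemma isGδ_orbitLifts [Countable G] [TopologicalSpace.IsCompletelyPseudoMetrizableSpace K]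
    [T2Space X]
    (hcont : ∀ g : G, Continuous fun p : X => g • p) (hZ : IsGδ Z) (hπ : ContinuousOn π Z) :
    IsGδ (orbitLifts (G := G) Z π) := by
  obtain ⟨F, hF, hFeq⟩ := exists_isClosed_orbitLifts_eq_inter hcont hπ
  rw [hFeq, univ_pi_eq_iInter]
  exact hF.isGδ.inter (.iInter fun g => hZ.preimage (continuous_apply g))

lemma isClosed_orbitLifts [T2Space X] (hcont : ∀ g : G, Continuous fun p : X => g • p)
    (hZ : IsClosed Z) (hπ : ContinuousOn π Z) : IsClosed (orbitLifts (G := G) Z π) := by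
  obtain ⟨F, hF, hFeq⟩ := exists_isClosed_orbitLifts_eq_inter hcont hπ
  rw [hFeq]
  exact hF.inter (isClosed_set_pi fun _ _ => hZ)

end OrbitLifts

theorem stmt18 (G : Type*) [Group G] [Countable G]
    (X : Type) [TopologicalSpace X] [PolishSpace X] [MulAction G X]
    (hcont : ∀ g : G, Continuous fun x : X => g • x) :
    (∃ Y : Set (G → (ℕ → Bool)), IsGδ Y ∧
      (∀ (g : G) (x : G → (ℕ → Bool)), x ∈ Y → bshift (ℕ → Bool) g x ∈ Y) ∧
      ∃ φ : Y → X, Continuous φ ∧ Function.Surjective φ ∧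
        ∀ (g : G) (x : G → (ℕ → Bool)) (hx : x ∈ Y) (hgx : bshift (ℕ → Bool) g x ∈ Y),
          φ ⟨bshift (ℕ → Bool) g x, hgx⟩ = g • φ ⟨x, hx⟩) ∧
    -- furthermore, if X is compact then Y can be chosen to be compact
    (CompactSpace X →
      ∃ Y : Set (G → (ℕ → Bool)), IsCompact Y ∧
        (∀ (g : G) (x : G → (ℕ → Bool)), x ∈ Y → bshift (ℕ → Bool) g x ∈ Y) ∧
        ∃ φ : Y → X, Continuous φ ∧ Function.Surjective φ ∧
          ∀ (g : G) (x : G → (ℕ → Bool)) (hx : x ∈ Y) (hgx : bshift (ℕ → Bool) g x ∈ Y),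
            φ ⟨bshift (ℕ → Bool) g x, hgx⟩ = g • φ ⟨x, hx⟩) := by
  rcases isEmpty_or_nonempty X with _ | _
  · exact ⟨⟨∅, .empty, isEquivariantCover_empty⟩,
      fun _ => ⟨∅, isCompact_empty, isEquivariantCover_empty⟩⟩
  obtain ⟨Z, hZ, π, hπ, hsurj⟩ := PolishSpace.exists_isGδ_cantor_surjOn X
  refine ⟨⟨_, isGδ_orbitLifts hcont hZ hπ, isEquivariantCover_orbitLifts hπ hsurj⟩, fun _ => ?_⟩
  let := TopologicalSpace.upgradeIsCompletelyMetrizable X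
  obtain ⟨π, hπ, hsurj⟩ := exists_nat_bool_continuous_surjective_of_compact X
  exact ⟨_, (isClosed_orbitLifts hcont isClosed_univ hπ.continuousOn).isCompact,
    isEquivariantCover_orbitLifts hπ.continuousOn (surjOn_univ.2 hsurj)⟩
end

section
/- Let F = F₂ be the free group freely generated by a and b, and let 2 = ℤ/2ℤ. Define ψ₀ : 2^F → (2 × 2)^F by ψ₀(x)(f) = (x(f) + x(fa), x(f) + x(fb)) (addition mod 2). Then ψ₀ is continuous and F-equivariant for the left shift actions, ψ₀ is surjective onto (2 × 2)^F, and ψ₀ is exactly 2-to-1: every fiber ψ₀⁻¹(y) has exactly two elements. -/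
/-- The discrete topology on `ZMod 2`. -/
instance : TopologicalSpace (ZMod 2) := ⊥

namespace FreeGroup

variable {α A : Type*} [AddCommGroup A]

def rightDiff (x : FreeGroup α → A) (f : FreeGroup α) (s : α) : A :=
  x (f * of s) - x f

theorem apply_eq_apply_one_of_forall_apply_mul_of {β : Type*} {d : FreeGroup α → β}
    (h : ∀ f s, d (f * of s) = d f) (f : FreeGroup α) : d f = d 1 := by
  suffices ∀ g f, d (f * g) = d f by simpa using this f 1
  intro g
  induction g using FreeGroup.induction_on with
  | C1 => simp
  | of s => exact (h · s)
  | inv_of s _ => exact fun f => by simpa using (h (f * (of s)⁻¹) s).symm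
  | mul g g' hg hg' => exact fun f => by rw [← mul_assoc, hg', hg]

/-- `(shearAction c g).unop` is the right action of `g`; the opposite group turns it into a
homomorphism. -/
def shearAction (c : FreeGroup α → α → A) : FreeGroup α →* (Equiv.Perm (FreeGroup α × A))ᵐᵒᵖ :=
  lift fun s => .op <| Equiv.prodShear (Equiv.mulRight (of s)) fun f => Equiv.addRight (c f s)

theorem shearAction_of_apply (c : FreeGroup α → α → A) (s : α) (p : FreeGroup α × A) :
    (shearAction c (of s)).unop p = (p.1 * of s, p.2 + c p.1 s) := by
  simp [shearAction]

theorem fst_shearAction_apply (c : FreeGroup α → α → A) (g : FreeGroup α) (p : FreeGroup α × A) :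
    ((shearAction c g).unop p).1 = p.1 * g := by
  induction g using FreeGroup.induction_on generalizing p with
  | C1 => simp
  | of s => simp [shearAction]
  | inv_of s _ => simp [shearAction]
  | mul g g' hg hg' => simp [hg, hg', mul_assoc]

theorem exists_forall_apply_mul_of_eq_add (c : FreeGroup α → α → A) :
    ∃ x : FreeGroup α → A, ∀ f s, x (f * of s) = x f + c f s := by
  refine ⟨fun f => ((shearAction c f).unop (1, 0)).2, fun f s => ?_⟩
  have hf : (shearAction c f).unop (1, 0) = (f, ((shearAction c f).unop (1, 0)).2) :=
    Prod.ext (by simp [fst_shearAction_apply]) rfl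
  dsimp only
  rw [_root_.map_mul, MulOpposite.unop_mul, Equiv.Perm.mul_apply, hf, shearAction_of_apply]

theorem rightDiff_surjective : Function.Surjective (rightDiff : (FreeGroup α → A) → _) := by
  intro c
  obtain ⟨x, hx⟩ := exists_forall_apply_mul_of_eq_add c
  exact ⟨x, funext₂ fun f s => by simp [rightDiff, hx]⟩

theorem rightDiff_preimage_singleton (x₀ : FreeGroup α → A) :
    rightDiff ⁻¹' {rightDiff x₀} = Set.range fun a : A => x₀ + Function.const _ a := by
  ext x
  simp only [Set.mem_preimage, Set.mem_singleton_iff, Set.mem_range]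
  constructor
  · intro hx
    have hconst := apply_eq_apply_one_of_forall_apply_mul_of (d := x - x₀) fun f s =>
      sub_eq_sub_iff_sub_eq_sub.mp (congrFun₂ hx f s)
    exact ⟨(x - x₀) 1, funext fun f => by simp [← hconst f]⟩
  · rintro ⟨a, rfl⟩
    funext f s
    simp [rightDiff]

theorem ncard_rightDiff_preimage_singleton (c : FreeGroup α → α → A) :
    (rightDiff ⁻¹' {c}).ncard = Nat.card A := by
  obtain ⟨x₀, rfl⟩ := rightDiff_surjective c
  rw [rightDiff_preimage_singleton]
  exact Set.ncard_range_of_injective fun a b h => by simpa using congrFun h 1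

end FreeGroup

theorem stmt19 (ψ₀ : (F2 → ZMod 2) → (F2 → ZMod 2 × ZMod 2))
    (hψ₀ : ∀ (x : F2 → ZMod 2) (f : F2),
      ψ₀ x f = (x f + x (f * FreeGroup.of 0), x f + x (f * FreeGroup.of 1))) :
    Continuous ψ₀ ∧
    (∀ (f : F2) (x : F2 → ZMod 2),
      ψ₀ (bshift (ZMod 2) f x) = bshift (ZMod 2 × ZMod 2) f (ψ₀ x)) ∧
    Function.Surjective ψ₀ ∧
    (∀ y : F2 → ZMod 2 × ZMod 2, (ψ₀ ⁻¹' {y}).ncard = 2) := by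
  have : DiscreteTopology (ZMod 2) := ⟨rfl⟩
  -- in characteristic 2, `x f + x (f * s) = x (f * s) - x f`
  set Φ := Equiv.piCongrRight fun _ : F2 => piFinTwoEquiv fun _ => ZMod 2
  have hψ : ψ₀ = Φ ∘ FreeGroup.rightDiff := by
    ext1 x; ext1 f
    simp [hψ₀, Φ, piFinTwoEquiv, FreeGroup.rightDiff, CharTwo.sub_eq_add, add_comm]
  refine ⟨continuous_pi fun f => ?_, fun g x => ?_, ?_, fun y => ?_⟩
  · simp_rw [hψ₀]
    fun_prop
  · ext1 h
    simp [bshift, hψ₀, mul_assoc]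
  · rw [hψ]
    exact Φ.surjective.comp FreeGroup.rightDiff_surjective
  · rw [hψ, Set.preimage_comp, ← Φ.image_symm_eq_preimage, Set.image_singleton,
      FreeGroup.ncard_rightDiff_preimage_singleton, Nat.card_zmod]
end
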